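/- arXiv:2512.24027 — 6 statements merged into one kernel-verified Lean document; each statement's English description precedes it below -/
import Mathlib

section
/- Let Ω ⊆ ℝ^d be a connected open set and f : Ω → Ω a C²-map such that f^n = id for some positive integer n, and f admits a fixed point X ∈ Ω at which the derivative df_X is the identity. Then f = id on Ω. -/
/-!
Bochner's linearisation. Near a fixed point `X` with `df_X = id`, the mean of the iterates
`h = (1/n) ∑_{k<n} f^k` satisfies `h ∘ f = h` (because `f^n = id`) and `dh_X = id`, so `h` is
injective near `X` by the inverse function theorem, forcing `f = id` near `X`. The set of points
near which `f = id` is open, and it is closed in `Ω`: at a limit point `f` still fixes the point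
and has derivative `id` there, by continuity of `f` and `df`. Connectedness of `Ω` concludes.
-/

open Set Filter Topology

variable {E : Type*} [NormedAddCommGroup E] [NormedSpace ℝ E]

noncomputable def iterateMean (f : E → E) (n : ℕ) : E → E :=
  (n : ℝ)⁻¹ • ∑ k ∈ Finset.range n, f^[k]

lemma iterateMean_apply_of_iterate_eq {f : E → E} {n : ℕ} {x : E} (hx : f^[n] x = x) :
    iterateMean f n (f x) = iterateMean f n x := by
  have hsum : ∑ k ∈ Finset.range n, f^[k] (f x) = ∑ k ∈ Finset.range n, f^[k] x := by
    have h := (Finset.sum_range_succ' (fun k => f^[k] x) n).symm.trans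
      (Finset.sum_range_succ (fun k => f^[k] x) n)
    simpa only [Function.iterate_succ_apply, Function.iterate_zero_apply, hx,
      add_left_inj] using h
  simp only [iterateMean, Pi.smul_apply, Finset.sum_apply, hsum]

lemma hasStrictFDerivAt_iterateMean {f : E → E} {a : E}
    (hf : HasStrictFDerivAt f (ContinuousLinearMap.id ℝ E) a) (ha : f a = a)
    {n : ℕ} (hn : n ≠ 0) :
    HasStrictFDerivAt (iterateMean f n) (ContinuousLinearMap.id ℝ E) a := by
  have hiter : ∀ k ∈ Finset.range n,
      HasStrictFDerivAt f^[k] (ContinuousLinearMap.id ℝ E) a := fun k _ => by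
    simpa [← ContinuousLinearMap.one_def] using hf.iterate ha k
  convert (HasStrictFDerivAt.sum hiter).const_smul (n : ℝ)⁻¹ using 1
  · rfl
  rw [Finset.sum_const, Finset.card_range, ← Nat.cast_smul_eq_nsmul ℝ, smul_smul,
    inv_mul_cancel₀ (Nat.cast_ne_zero.mpr hn), one_smul]

lemma eventuallyEq_id_of_iterate_eq_of_hasStrictFDerivAt [CompleteSpace E] {f : E → E} {a : E}
    (hf : HasStrictFDerivAt f (ContinuousLinearMap.id ℝ E) a) (ha : f a = a)
    {n : ℕ} (hn : n ≠ 0) (hper : ∀ᶠ x in 𝓝 a, f^[n] x = x) : f =ᶠ[𝓝 a] id := by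
  have hmean : HasStrictFDerivAt (iterateMean f n)
      ((ContinuousLinearEquiv.refl ℝ E : E ≃L[ℝ] E) : E →L[ℝ] E) a :=
    hasStrictFDerivAt_iterateMean hf ha hn
  have hf_tendsto : Tendsto f (𝓝 a) (𝓝 a) := by simpa only [ha] using hf.continuousAt.tendsto
  filter_upwards [hmean.eventually_left_inverse,
    hf_tendsto.eventually hmean.eventually_left_inverse, hper] with x hx hfx hperx
  rw [← hfx, iterateMean_apply_of_iterate_eq hperx, hx, id]

theorem eqOn_id_of_iterate_eq_of_fderiv_eq_id [CompleteSpace E] {Ω : Set E} (hΩo : IsOpen Ω)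
    (hΩc : IsPreconnected Ω) {f : E → E} (hf : ContDiffOn ℝ 1 f Ω) {n : ℕ} (hn : n ≠ 0)
    (hiter : ∀ x ∈ Ω, f^[n] x = x) {X : E} (hX : X ∈ Ω) (hfX : f X = X)
    (hdf : fderiv ℝ f X = ContinuousLinearMap.id ℝ E) :
    EqOn f id Ω := by
  have hlocal : ∀ x ∈ Ω, f x = x → fderiv ℝ f x = ContinuousLinearMap.id ℝ E →
      f =ᶠ[𝓝 x] id := fun x hx hfx hdfx =>
    eventuallyEq_id_of_iterate_eq_of_hasStrictFDerivAt
      (hdfx ▸ (hf.contDiffAt (hΩo.mem_nhds hx)).hasStrictFDerivAt one_ne_zero) hfx hn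
      (eventually_of_mem (hΩo.mem_nhds hx) hiter)
  set S := Ω ∩ {x | f =ᶠ[𝓝 x] id}
  have hS_open : IsOpen S := hΩo.inter isOpen_setOfPred_eventually_nhds
  have hS_fix : EqOn f id S := fun x hx => hx.2.eq_of_nhds
  have hS_fderiv : EqOn (fderiv ℝ f) (fun _ => ContinuousLinearMap.id ℝ E) S := fun x hx =>
    hx.2.fderiv_eq.trans fderiv_id
  have hS_closed : closure S ∩ Ω ⊆ S := by
    rintro x ⟨hxS, hxΩ⟩
    have hsub : insert x S ⊆ Ω := insert_subset hxΩ inter_subset_left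
    have hcl : insert x S ⊆ closure S := insert_subset hxS subset_closure
    refine ⟨hxΩ, hlocal x hxΩ ?_ ?_⟩
    · exact hS_fix.of_subset_closure (hf.continuousOn.mono hsub) continuousOn_id
        (subset_insert x S) hcl (mem_insert x S)
    · exact hS_fderiv.of_subset_closure
        ((hf.continuousOn_fderiv_of_isOpen hΩo le_rfl).mono hsub) continuousOn_const
        (subset_insert x S) hcl (mem_insert x S)
  have hΩS : Ω ⊆ S :=
    hΩc.subset_of_closure_inter_subset hS_open ⟨X, hX, hX, hlocal X hX hfX hdf⟩ hS_closed
  exact hS_fix.mono hΩS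

theorem stmt0_general {d : ℕ} {Ω : Set (EuclideanSpace ℝ (Fin d))}
    (hΩo : IsOpen Ω) (hΩc : IsConnected Ω)
    {f : EuclideanSpace ℝ (Fin d) → EuclideanSpace ℝ (Fin d)}
    (hC2 : ContDiffOn ℝ 2 f Ω)
    {n : ℕ} (hn : 0 < n) (hiter : ∀ x ∈ Ω, f^[n] x = x)
    {X : EuclideanSpace ℝ (Fin d)} (hX : X ∈ Ω) (hfX : f X = X)
    (hdf : fderiv ℝ f X = ContinuousLinearMap.id ℝ (EuclideanSpace ℝ (Fin d))) :
    EqOn f id Ω :=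
  eqOn_id_of_iterate_eq_of_fderiv_eq_id hΩo hΩc.isPreconnected (hC2.of_le (by norm_num))
    hn.ne' hiter hX hfX hdf

/-- If `Ω ⊆ ℝ^d` is a connected open set, `f : Ω → Ω` is `C²`,
`f^n = id` on `Ω` for some positive `n`, and `f` has a fixed point `X ∈ Ω` with
`df_X = Id`, then `f = id` on `Ω`. -/
theorem stmt0 {d : ℕ} (hd : 1 ≤ d) {Ω : Set (EuclideanSpace ℝ (Fin d))}
    (hΩo : IsOpen Ω) (hΩc : IsConnected Ω)
    {f : EuclideanSpace ℝ (Fin d) → EuclideanSpace ℝ (Fin d)}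
    (hmaps : MapsTo f Ω Ω) (hC2 : ContDiffOn ℝ 2 f Ω)
    {n : ℕ} (hn : 0 < n) (hiter : ∀ x ∈ Ω, f^[n] x = x)
    {X : EuclideanSpace ℝ (Fin d)} (hX : X ∈ Ω) (hfX : f X = X)
    (hdf : fderiv ℝ f X = ContinuousLinearMap.id ℝ (EuclideanSpace ℝ (Fin d))) :
    EqOn f id Ω :=
  stmt0_general hΩo hΩc hC2 hn hiter hX hfX hdf
end

section
/- Let Ω ⊆ ℝ^d be a connected open set and f : Ω → Ω a C²-map with f^n = id for some n ≥ 1. Then the set F = {x ∈ Ω : f(x) = x and df_x = Id} is open in Ω. -/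
/-!
Averaging over the orbit, `h = (1/n) ∑_{k<n} f^[k]`, gives a map with `h ∘ f = h` wherever
`f^[n] = id`. At a fixed point `x₀` where `df = Id`, every iterate also has derivative `Id`, hence so
does `h`, and by the inverse function theorem `h` is injective near `x₀`. Then `h (f y) = h y` forces
`f y = y` for all `y` near `x₀`, so `f` is the identity on a neighbourhood of `x₀`, and every point of
that neighbourhood again lies in `F`.
-/

open Set Filter Topology

theorem eventuallyEq_id_of_comp_eventuallyEq_of_injOn {X Y : Type*} [TopologicalSpace X]
    {f : X → X} {g : X → Y} {x : X} {U : Set X} (hf : ContinuousAt f x) (hfx : f x = x)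
    (hU : U ∈ 𝓝 x) (hg : InjOn g U) (hgf : g ∘ f =ᶠ[𝓝 x] g) : f =ᶠ[𝓝 x] id := by
  have hfU : f ⁻¹' U ∈ 𝓝 x := hf.preimage_mem_nhds (by rwa [hfx])
  filter_upwards [hU, hfU, hgf] with y hyU hfyU hy
  exact hg hfyU hyU hy

section OrbitAverage

variable (𝕜 : Type*) {E : Type*} [NontriviallyNormedField 𝕜] [NormedAddCommGroup E]
  [NormedSpace 𝕜 E]

noncomputable def orbitAverage (f : E → E) (n : ℕ) (y : E) : E :=
  (n : 𝕜)⁻¹ • ∑ k ∈ Finset.range n, f^[k] y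

variable {𝕜} {f : E → E} {n : ℕ}

theorem orbitAverage_apply_of_iterate_eq {y : E} (hy : f^[n] y = y) :
    orbitAverage 𝕜 f n (f y) = orbitAverage 𝕜 f n y := by
  have hshift := Finset.sum_range_succ' (fun k => f^[k] y) n
  rw [Finset.sum_range_succ, hy, Function.iterate_zero_apply] at hshift
  simp only [orbitAverage, ← Function.iterate_succ_apply, add_right_cancel hshift.symm]

theorem HasStrictFDerivAt.orbitAverage [CharZero 𝕜] {x : E} (hf : HasStrictFDerivAt f (.id 𝕜 E) x)
    (hfx : f x = x) (hn : n ≠ 0) : HasStrictFDerivAt (orbitAverage 𝕜 f n) (.id 𝕜 E) x := by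
  have hsum := (HasStrictFDerivAt.fun_sum fun k (_ : k ∈ Finset.range n) =>
    hf.iterate hfx k).const_smul (n : 𝕜)⁻¹
  convert hsum using 1
  · rfl
  · rw [← ContinuousLinearMap.one_def]
    simp only [one_pow, Finset.sum_const, Finset.card_range, ← Nat.cast_smul_eq_nsmul 𝕜, smul_smul,
      inv_mul_cancel₀ (Nat.cast_ne_zero.2 hn : (n : 𝕜) ≠ 0), one_smul]

end OrbitAverage

theorem eventuallyEq_id_of_iterate_eventuallyEq_id {𝕜 E : Type*} [NontriviallyNormedField 𝕜]
    [CharZero 𝕜] [NormedAddCommGroup E] [NormedSpace 𝕜 E] [CompleteSpace E] {f : E → E} {x : E}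
    {n : ℕ} (hn : n ≠ 0) (hf : HasStrictFDerivAt f (.id 𝕜 E) x) (hfx : f x = x)
    (hiter : f^[n] =ᶠ[𝓝 x] id) : f =ᶠ[𝓝 x] id := by
  have havg : HasStrictFDerivAt (orbitAverage 𝕜 f n)
      ((ContinuousLinearEquiv.refl 𝕜 E : E ≃L[𝕜] E) : E →L[𝕜] E) x :=
    hf.orbitAverage hfx hn
  let φ := havg.toOpenPartialHomeomorph (orbitAverage 𝕜 f n)
  refine eventuallyEq_id_of_comp_eventuallyEq_of_injOn hf.continuousAt hfx
    (φ.open_source.mem_nhds havg.mem_toOpenPartialHomeomorph_source) φ.injOn ?_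
  filter_upwards [hiter] with y hy
  exact orbitAverage_apply_of_iterate_eq hy

theorem stmt1_general {d : ℕ} {Ω : Set (EuclideanSpace ℝ (Fin d))}
    (hΩo : IsOpen Ω)
    {f : EuclideanSpace ℝ (Fin d) → EuclideanSpace ℝ (Fin d)}
    (hC2 : ContDiffOn ℝ 2 f Ω)
    {n : ℕ} (hn : 0 < n) (hiter : ∀ x ∈ Ω, f^[n] x = x) :
    IsOpen {x | x ∈ Ω ∧ f x = x ∧
      fderiv ℝ f x = ContinuousLinearMap.id ℝ (EuclideanSpace ℝ (Fin d))} := by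
  refine isOpen_iff_mem_nhds.2 fun x ⟨hx, hfx, hdf⟩ => ?_
  have hstrict : HasStrictFDerivAt f (.id ℝ _) x :=
    hdf ▸ (hC2.contDiffAt (hΩo.mem_nhds hx)).hasStrictFDerivAt two_ne_zero
  have hlocal : f =ᶠ[𝓝 x] id :=
    eventuallyEq_id_of_iterate_eventuallyEq_id hn.ne' hstrict hfx
      (eventually_of_mem (hΩo.mem_nhds hx) hiter)
  filter_upwards [hΩo.mem_nhds hx, hlocal.eventuallyEq_nhds] with y hy hfy
  exact ⟨hy, hfy.eq_of_nhds, by rw [hfy.fderiv_eq, fderiv_id]⟩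

/-- If `Ω ⊆ ℝ^d` is a connected open set and `f : Ω → Ω` is `C²`
with `f^n = id` on `Ω`, then `F = {x ∈ Ω : f x = x and df_x = Id}` is open. -/
theorem stmt1 {d : ℕ} {Ω : Set (EuclideanSpace ℝ (Fin d))}
    (hΩo : IsOpen Ω) (hΩc : IsConnected Ω)
    {f : EuclideanSpace ℝ (Fin d) → EuclideanSpace ℝ (Fin d)}
    (hmaps : MapsTo f Ω Ω) (hC2 : ContDiffOn ℝ 2 f Ω)
    {n : ℕ} (hn : 0 < n) (hiter : ∀ x ∈ Ω, f^[n] x = x) :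
    IsOpen {x | x ∈ Ω ∧ f x = x ∧
      fderiv ℝ f x = ContinuousLinearMap.id ℝ (EuclideanSpace ℝ (Fin d))} :=
  stmt1_general hΩo hC2 hn hiter
end

section
/- Let Ω ⊆ ℝ^d be a nonempty connected open set of ℝ^d and let G be a group of C² diffeomorphisms of Ω (under composition) all fixing a common point x₀ ∈ Ω. Then the map J : G → GL_d(ℝ) sending g to its derivative at x₀ is a group homomorphism, and every finite-order element of ker J is the identity. -/
open Set Filter Topology Function

/-! If `f` fixes `p` with strict derivative `id` there and `f^[n] = id` near `p`, the Birkhoff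
average `φ = n⁻¹ • ∑_{k<n} f^[k]` still has derivative `id` at `p`, hence is injective near `p`,
and satisfies `φ ∘ f = φ`; so `f = id` near `p`. For a finite-order `g` with `D(ρ g)(x₀) = id`,
the set of points near which `ρ g = id` is thus nonempty and open, and it is closed in `Ω`
because `ρ g` and `D(ρ g)` are continuous; connectedness of `Ω` finishes the proof. The chain
rule at the common fixed point makes `g ↦ D(ρ g)(x₀)` a monoid homomorphism. -/

section

variable {𝕜 : Type*} [NontriviallyNormedField 𝕜] {E : Type*} [NormedAddCommGroup E]
  [NormedSpace 𝕜 E]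

theorem HasStrictFDerivAt.eventually_injective_of_id {φ : E → E} {p : E}
    (hφ : HasStrictFDerivAt φ (ContinuousLinearMap.id 𝕜 E) p) :
    ∀ᶠ q in 𝓝 (p, p), φ q.1 = φ q.2 → q.1 = q.2 := by
  filter_upwards [(hasStrictFDerivAt_iff_isLittleO.mp hφ).def (by norm_num : (0 : ℝ) < 1 / 2)]
    with q hq hφq
  rw [hφq, sub_self, zero_sub, norm_neg, ContinuousLinearMap.id_apply] at hq
  exact sub_eq_zero.mp (norm_le_zero_iff.mp (by linarith [norm_nonneg (q.1 - q.2)]))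

theorem HasStrictFDerivAt.birkhoffAverage_id [CharZero 𝕜] {f : E → E} {p : E}
    (hf : HasStrictFDerivAt f (ContinuousLinearMap.id 𝕜 E) p) (hfp : IsFixedPt f p) {n : ℕ}
    (hn : n ≠ 0) :
    HasStrictFDerivAt (birkhoffAverage 𝕜 f id n) (ContinuousLinearMap.id 𝕜 E) p := by
  have hsum := (HasStrictFDerivAt.fun_sum (u := Finset.range n)
    fun k _ => hf.iterate hfp k).const_smul (n : 𝕜)⁻¹
  convert hsum using 1
  · rfl
  · rw [← ContinuousLinearMap.one_def]
    simp only [one_pow, Finset.sum_const, Finset.card_range]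
    rw [← Nat.cast_smul_eq_nsmul 𝕜, smul_smul, inv_mul_cancel₀ (Nat.cast_ne_zero.mpr hn),
      one_smul]

theorem Function.IsPeriodicPt.birkhoffAverage_apply_self {R M : Type*} [DivisionSemiring R]
    [AddCommGroup M] [Module R M] {f : M → M} {n : ℕ} {x : M} (hx : IsPeriodicPt f n x) :
    birkhoffAverage R f id n (f x) = birkhoffAverage R f id n x := by
  rw [← sub_eq_zero, birkhoffAverage_apply_sub_birkhoffAverage, id, id, hx.eq, sub_self,
    smul_zero]

theorem HasStrictFDerivAt.eventuallyEq_id_of_eventually_isPeriodicPt [CharZero 𝕜] {f : E → E}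
    {p : E} {n : ℕ} (hf : HasStrictFDerivAt f (ContinuousLinearMap.id 𝕜 E) p)
    (hfp : IsFixedPt f p) (hn : n ≠ 0) (hper : ∀ᶠ x in 𝓝 p, IsPeriodicPt f n x) :
    f =ᶠ[𝓝 p] id := by
  have hinj := (hf.birkhoffAverage_id hfp hn).eventually_injective_of_id
  have hgraph : Tendsto (fun x => (f x, x)) (𝓝 p) (𝓝 (p, p)) := by
    have := hf.continuousAt.prodMk continuousAt_id
    rwa [ContinuousAt, hfp.eq] at this
  filter_upwards [hper, hgraph.eventually hinj] with x hx hxinj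
  exact hxinj (hx.birkhoffAverage_apply_self (R := 𝕜))

end

theorem ContinuousAt.eq_of_mem_closure_of_eqOn {X Y : Type*} [TopologicalSpace X]
    [TopologicalSpace Y] [T2Space Y] {f g : X → Y} {s : Set X} {x : X} (hx : x ∈ closure s)
    (hf : ContinuousAt f x) (hg : ContinuousAt g x) (hfg : EqOn f g s) : f x = g x := by
  have := mem_closure_iff_nhdsWithin_neBot.mp hx
  exact tendsto_nhds_unique_of_eventuallyEq (hf.mono_left nhdsWithin_le_nhds)
    (hg.mono_left nhdsWithin_le_nhds) (eventually_nhdsWithin_of_forall hfg)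

section

variable {𝕜 : Type*} [RCLike 𝕜] {E : Type*} [NormedAddCommGroup E] [NormedSpace 𝕜 E]

theorem IsPreconnected.eqOn_id_of_isPeriodicPt {f : E → E} {U : Set E} {p : E} {n : ℕ}
    (hUc : IsPreconnected U) (hUo : IsOpen U) (hf : ContDiffOn 𝕜 1 f U) (hn : n ≠ 0)
    (hper : ∀ x ∈ U, IsPeriodicPt f n x) (hp : p ∈ U) (hfp : IsFixedPt f p)
    (hdf : fderiv 𝕜 f p = ContinuousLinearMap.id 𝕜 E) : EqOn f id U := by
  have hlocal : ∀ x ∈ U, IsFixedPt f x → fderiv 𝕜 f x = ContinuousLinearMap.id 𝕜 E →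
      f =ᶠ[𝓝 x] id := fun x hx hfx hdfx => by
    have hstrict := (hf.contDiffAt (hUo.mem_nhds hx)).hasStrictFDerivAt one_ne_zero
    rw [hdfx] at hstrict
    exact hstrict.eventuallyEq_id_of_eventually_isPeriodicPt hfx hn
      (eventually_of_mem (hUo.mem_nhds hx) hper)
  have hUS : U ⊆ {x | f =ᶠ[𝓝 x] id} := by
    refine hUc.subset_of_closure_inter_subset isOpen_setOfPred_eventually_nhds
      ⟨p, hp, hlocal p hp hfp hdf⟩ ?_
    rintro x ⟨hxS, hxU⟩
    have hcont : ContinuousAt f x := hf.continuousOn.continuousAt (hUo.mem_nhds hxU)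
    have hcont' : ContinuousAt (fderiv 𝕜 f) x :=
      (hf.continuousOn_fderiv_of_isOpen hUo le_rfl).continuousAt (hUo.mem_nhds hxU)
    refine hlocal x hxU (hcont.eq_of_mem_closure_of_eqOn hxS continuousAt_id
      fun y hy => hy.eq_of_nhds) ?_
    exact hcont'.eq_of_mem_closure_of_eqOn hxS continuousAt_const
      fun y hy => by rw [hy.fderiv_eq, fderiv_id]
  exact fun x hx => (hUS hx).eq_of_nhds

end

section

variable {𝕜 : Type*} [NontriviallyNormedField 𝕜] {E : Type*} [NormedAddCommGroup E]
  [NormedSpace 𝕜 E] {G : Type*} [Monoid G]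

noncomputable def fderivMonoidHomOfFixedPoint (ρ : G → E → E) (x₀ : E) (hρ1 : ρ 1 =ᶠ[𝓝 x₀] id)
    (hρmul : ∀ g h, ρ (g * h) =ᶠ[𝓝 x₀] ρ g ∘ ρ h) (hρd : ∀ g, DifferentiableAt 𝕜 (ρ g) x₀)
    (hfix : ∀ g, ρ g x₀ = x₀) : G →* E →L[𝕜] E where
  toFun g := fderiv 𝕜 (ρ g) x₀
  map_one' := by rw [hρ1.fderiv_eq, fderiv_id, ContinuousLinearMap.one_def]
  map_mul' g h := by
    rw [(hρmul g h).fderiv_eq, fderiv_comp x₀ ((hfix h).symm ▸ hρd g) (hρd h), hfix h,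
      ContinuousLinearMap.mul_def]

end

theorem apply_pow_eq_iterate {G α : Type*} [Monoid G] {ρ : G → α → α} {U : Set α}
    (hρ1 : ∀ x ∈ U, ρ 1 x = x) (hρmul : ∀ g h : G, ∀ x ∈ U, ρ (g * h) x = ρ g (ρ h x))
    (g : G) (k : ℕ) {x : α} (hx : x ∈ U) : ρ (g ^ k) x = (ρ g)^[k] x := by
  induction k with
  | zero => rw [pow_zero, iterate_zero_apply, hρ1 x hx]
  | succ k ih => rw [pow_succ', hρmul g _ x hx, ih, iterate_succ_apply']

theorem stmt5_general {d : ℕ} {Ω : Set (EuclideanSpace ℝ (Fin d))}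
    (hΩo : IsOpen Ω) (hΩc : IsConnected Ω) {G : Type*} [Group G]
    (ρ : G → EuclideanSpace ℝ (Fin d) → EuclideanSpace ℝ (Fin d))
    (hρ1 : ∀ x ∈ Ω, ρ 1 x = x)
    (hρmul : ∀ g h : G, ∀ x ∈ Ω, ρ (g * h) x = ρ g (ρ h x))
    (hC2 : ∀ g : G, ContDiffOn ℝ 2 (ρ g) Ω)
    {x₀ : EuclideanSpace ℝ (Fin d)} (hx₀ : x₀ ∈ Ω) (hfix : ∀ g : G, ρ g x₀ = x₀) :
    (fderiv ℝ (ρ (1 : G)) x₀ = ContinuousLinearMap.id ℝ (EuclideanSpace ℝ (Fin d))) ∧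
    (∀ g h : G,
      fderiv ℝ (ρ (g * h)) x₀ = (fderiv ℝ (ρ g) x₀).comp (fderiv ℝ (ρ h) x₀)) ∧
    (∀ g : G, IsUnit (fderiv ℝ (ρ g) x₀)) ∧
    (∀ g : G,
      fderiv ℝ (ρ g) x₀ = ContinuousLinearMap.id ℝ (EuclideanSpace ℝ (Fin d)) →
      IsOfFinOrder g → EqOn (ρ g) id Ω) := by
  have hΩx₀ := hΩo.mem_nhds hx₀
  let J := fderivMonoidHomOfFixedPoint ρ x₀ (eventually_of_mem hΩx₀ hρ1)
    (fun g h => eventually_of_mem hΩx₀ (hρmul g h))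
    (fun g => ((hC2 g).contDiffAt hΩx₀).differentiableAt two_ne_zero) hfix
  refine ⟨J.map_one, J.map_mul, fun g => (Group.isUnit g).map J, fun g hg hfin => ?_⟩
  have hper : ∀ x ∈ Ω, IsPeriodicPt (ρ g) (orderOf g) x := fun x hx => by
    rw [IsPeriodicPt, IsFixedPt, ← apply_pow_eq_iterate hρ1 hρmul g _ hx, pow_orderOf_eq_one,
      hρ1 x hx]
  exact hΩc.isPreconnected.eqOn_id_of_isPeriodicPt hΩo ((hC2 g).of_le one_le_two)
    hfin.orderOf_pos.ne' hper hx₀ (hfix g) hg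

/-- Let `G` be a group acting by `C²` diffeomorphisms of a nonempty
connected open set `Ω ⊆ ℝ^d`, all fixing a common point `x₀ ∈ Ω`. Then the map
`J : g ↦ dg_{x₀}` is a group homomorphism into `GL_d(ℝ)` (it is multiplicative, sends
`1` to the identity, and takes invertible values), and every finite-order element of
its kernel acts as the identity on `Ω`. -/
theorem stmt5 {d : ℕ} {Ω : Set (EuclideanSpace ℝ (Fin d))}
    (hΩo : IsOpen Ω) (hΩc : IsConnected Ω) {G : Type*} [Group G]
    (ρ : G → EuclideanSpace ℝ (Fin d) → EuclideanSpace ℝ (Fin d))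
    (hρ1 : ∀ x ∈ Ω, ρ 1 x = x)
    (hρmul : ∀ g h : G, ∀ x ∈ Ω, ρ (g * h) x = ρ g (ρ h x))
    (hbij : ∀ g : G, BijOn (ρ g) Ω Ω)
    (hC2 : ∀ g : G, ContDiffOn ℝ 2 (ρ g) Ω)
    {x₀ : EuclideanSpace ℝ (Fin d)} (hx₀ : x₀ ∈ Ω) (hfix : ∀ g : G, ρ g x₀ = x₀) :
    (fderiv ℝ (ρ (1 : G)) x₀ = ContinuousLinearMap.id ℝ (EuclideanSpace ℝ (Fin d))) ∧
    (∀ g h : G,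
      fderiv ℝ (ρ (g * h)) x₀ = (fderiv ℝ (ρ g) x₀).comp (fderiv ℝ (ρ h) x₀)) ∧
    (∀ g : G, IsUnit (fderiv ℝ (ρ g) x₀)) ∧
    (∀ g : G,
      fderiv ℝ (ρ g) x₀ = ContinuousLinearMap.id ℝ (EuclideanSpace ℝ (Fin d)) →
      IsOfFinOrder g → EqOn (ρ g) id Ω) :=
  stmt5_general hΩo hΩc ρ hρ1 hρmul hC2 hx₀ hfix
end

section
/- Let f : Ω → Ω be C² on an open ball B(x, α) ⊆ Ω ⊆ ℝ^d with f^n = id, and suppose that for all z ∈ B(x, α) and all 0 ≤ k ≤ n−1 we have ‖d(f^k)_z − Id‖ ≤ ε and ‖f^{k+1}(z) − f^k(z) − d(f^k)_z(f(z) − z)‖ ≤ C₀‖f(z) − z‖². If z, f(z) ∈ B(x, α), then n‖f(z) − z‖ ≤ n(C₀‖f(z) − z‖² + ε‖f(z) − z‖). -/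
open Set

/-- Under the Taylor and derivative estimates on a ball `B(x,α)` for the
iterates of a map `f` with `f^n = id`, if `z` and `f z` lie in the ball, then
`n‖f z − z‖ ≤ n (C₀‖f z − z‖² + ε‖f z − z‖)`. -/
theorem stmt6 {d : ℕ} {Ω : Set (EuclideanSpace ℝ (Fin d))} (hΩo : IsOpen Ω)
    {f : EuclideanSpace ℝ (Fin d) → EuclideanSpace ℝ (Fin d)}
    (hmaps : MapsTo f Ω Ω)
    {x : EuclideanSpace ℝ (Fin d)} {α : ℝ} (hα : 0 < α)
    (hball : Metric.ball x α ⊆ Ω) (hC2 : ContDiffOn ℝ 2 f (Metric.ball x α))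
    {n : ℕ} (hn : 0 < n) (hiter : ∀ y ∈ Ω, f^[n] y = y)
    {C₀ ε : ℝ} (hC₀ : 0 < C₀) (hε : 0 < ε)
    (hder : ∀ z ∈ Metric.ball x α, ∀ k < n,
      ‖fderiv ℝ (f^[k]) z - ContinuousLinearMap.id ℝ (EuclideanSpace ℝ (Fin d))‖ ≤ ε)
    (htay : ∀ z ∈ Metric.ball x α, ∀ k < n,
      ‖f^[k + 1] z - f^[k] z - fderiv ℝ (f^[k]) z (f z - z)‖ ≤ C₀ * ‖f z - z‖ ^ 2)
    {z : EuclideanSpace ℝ (Fin d)}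
    (hz : z ∈ Metric.ball x α) (hfz : f z ∈ Metric.ball x α) :
    (n : ℝ) * ‖f z - z‖ ≤ (n : ℝ) * (C₀ * ‖f z - z‖ ^ 2 + ε * ‖f z - z‖) := by
  have hzΩ : z ∈ Ω := hball hz
  have hfn : f^[n] z = z := hiter z hzΩ
  set v := f z - z with hv
  -- telescoping sum of increments is zero
  have htel : ∑ k ∈ Finset.range n, (f^[k + 1] z - f^[k] z) = 0 := by
    rw [Finset.sum_range_sub (fun k => f^[k] z)]
    simp [hfn]
  have hsum : (n : ℕ) • v = ∑ k ∈ Finset.range n, (v - (f^[k + 1] z - f^[k] z)) := by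
    rw [Finset.sum_sub_distrib, htel, sub_zero, Finset.sum_const, Finset.card_range]
  have key : ∀ k ∈ Finset.range n,
      ‖v - (f^[k + 1] z - f^[k] z)‖ ≤ ε * ‖v‖ + C₀ * ‖v‖ ^ 2 := by
    intro k hk
    rw [Finset.mem_range] at hk
    have h1 := hder z hz k hk
    have h2 := htay z hz k hk
    have heq : v - (f^[k + 1] z - f^[k] z) =
        -((fderiv ℝ (f^[k]) z - ContinuousLinearMap.id ℝ (EuclideanSpace ℝ (Fin d))) v)
          - (f^[k + 1] z - f^[k] z - fderiv ℝ (f^[k]) z v) := by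
      simp only [ContinuousLinearMap.sub_apply, ContinuousLinearMap.id_apply]
      abel
    rw [heq]
    calc ‖-((fderiv ℝ (f^[k]) z - ContinuousLinearMap.id ℝ (EuclideanSpace ℝ (Fin d))) v)
          - (f^[k + 1] z - f^[k] z - fderiv ℝ (f^[k]) z v)‖
        ≤ ‖(fderiv ℝ (f^[k]) z - ContinuousLinearMap.id ℝ (EuclideanSpace ℝ (Fin d))) v‖
          + ‖f^[k + 1] z - f^[k] z - fderiv ℝ (f^[k]) z v‖ := by
          refine (norm_sub_le _ _).trans ?_
          rw [norm_neg]
      _ ≤ ε * ‖v‖ + C₀ * ‖v‖ ^ 2 := by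
          gcongr
          exact ((fderiv ℝ (f^[k]) z -
            ContinuousLinearMap.id ℝ (EuclideanSpace ℝ (Fin d))).le_opNorm v).trans
            (by gcongr)
  have hmain : (n : ℝ) * ‖v‖ ≤ (n : ℝ) * (ε * ‖v‖ + C₀ * ‖v‖ ^ 2) := by
    have := (norm_sum_le _ _).trans (Finset.sum_le_sum key)
    rw [← hsum, ← Nat.cast_smul_eq_nsmul ℝ, norm_smul, Finset.sum_const, Finset.card_range, nsmul_eq_mul] at this
    simp only [Real.norm_natCast] at this
    simpa using this
  linarith
end

section
/- Let χ : (0,∞)^d → ℝ be defined by χ(x) = Σ_{s ∈ S} w(s) x^s (multi-index notation), where S ⊆ {−1,0,1}^d is finite with positive weights w(s) > 0, and S is not contained in any closed half-space {y : ⟨x, y⟩ ≥ 0} with x ≠ 0. Then χ attains a global minimum on (0,∞)^d at a unique point x₀, and x₀ is the unique solution in (0,∞)^d of ∂χ/∂x₁ = ⋯ = ∂χ/∂x_d = 0. -/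
/-!
In logarithmic coordinates `x = exp t` the inventory becomes `F t = ∑ w(s) e^⟨t, s⟩`, a positive
combination of exponentials of linear forms. By (H1) the steps span `ℝ^d`, so `F` is strictly
convex. Since `e^p ≥ max p 0` and (H1) makes the positively homogeneous function
`∑ w(s) max ⟨t, s⟩ 0` positive on the unit sphere, `F` grows at least linearly, hence attains its
minimum, which is unique by strict convexity. A critical point of `χ` is, by the chain rule, one of
the convex function `F`, hence a minimum of `F`.
-/

open Real Set Filter Topology Matrix

theorem exists_pos_mul_norm_le_of_posHomogeneous {E : Type*} [NormedAddCommGroup E]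
    [NormedSpace ℝ E] [ProperSpace E] {g : E → ℝ} (hg : Continuous g)
    (hhom : ∀ a : ℝ, 0 ≤ a → ∀ t, g (a • t) = a * g t) (hpos : ∀ t, t ≠ 0 → 0 < g t) :
    ∃ c > 0, ∀ t, c * ‖t‖ ≤ g t := by
  obtain ⟨c, hc, hcg⟩ := (isCompact_sphere (0 : E) 1).exists_forall_le' hg.continuousOn
    fun u hu => hpos u (ne_zero_of_mem_unit_sphere ⟨u, hu⟩)
  refine ⟨c, hc, fun t => ?_⟩
  rcases eq_or_ne t 0 with rfl | ht
  · have hg0 : g 0 = 0 := by simpa using hhom 0 le_rfl 0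
    simp [hg0]
  have hnorm : ‖t‖ ≠ 0 := norm_ne_zero_iff.2 ht
  calc c * ‖t‖ ≤ g (‖t‖⁻¹ • t) * ‖t‖ := by
        gcongr
        exact hcg _ (by simp [norm_smul, hnorm])
    _ = g t := by rw [hhom _ (by positivity)]; field_simp

theorem ConvexOn.isMinOn_of_hasFDerivAt_zero {E : Type*} [NormedAddCommGroup E]
    [NormedSpace ℝ E] {f : E → ℝ} {x : E} (hf : ConvexOn ℝ univ f)
    (hx : HasFDerivAt f (0 : E →L[ℝ] ℝ) x) : IsMinOn f univ x := by
  refine isMinOn_univ_iff.2 fun y => ?_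
  let L : ℝ →ᵃ[ℝ] E := AffineMap.lineMap x y
  have hline : ConvexOn ℝ univ (f ∘ L) := by simpa using hf.comp_affineMap L
  have hderiv : HasDerivAt (f ∘ L) 0 0 := by
    simpa using hx.comp_hasDerivAt_of_eq (0 : ℝ) AffineMap.hasDerivAt_lineMap (by simp)
  simpa [L, slope_def_field] using
    hline.le_slope_of_hasDerivAt (mem_univ 0) (mem_univ 1) one_pos hderiv

namespace Inventory

variable {d : ℕ} (S : Finset (Fin d → ℤ)) (w : (Fin d → ℤ) → ℝ)

noncomputable def inventory (x : Fin d → ℝ) : ℝ := ∑ s ∈ S, w s * ∏ i, x i ^ s i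

noncomputable def expInventory (t : Fin d → ℝ) : ℝ := ∑ s ∈ S, w s * exp (t ⬝ᵥ (Int.cast ∘ s))

theorem continuous_expInventory : Continuous (expInventory S w) := by
  unfold expInventory; fun_prop

theorem inventory_exp (t : Fin d → ℝ) :
    inventory S w (fun i => exp (t i)) = expInventory S w t := by
  simp only [inventory, expInventory, dotProduct, exp_sum, Function.comp_apply, exp_mul,
    rpow_intCast]

theorem inventory_eq_expInventory_log {x : Fin d → ℝ} (hx : ∀ i, 0 < x i) :
    inventory S w x = expInventory S w (fun i => log (x i)) := by
  rw [← inventory_exp]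
  simp only [exp_log (hx _)]

theorem differentiableAt_inventory {x : Fin d → ℝ} (hx : ∀ i, x i ≠ 0) :
    DifferentiableAt ℝ (inventory S w) x := by
  unfold inventory; fun_prop (disch := simp [hx])

theorem hasFDerivAt_expInventory_log {x : Fin d → ℝ} (hx : ∀ i, 0 < x i)
    (hcrit : fderiv ℝ (inventory S w) x = 0) :
    HasFDerivAt (expInventory S w) (0 : (Fin d → ℝ) →L[ℝ] ℝ) (fun i => log (x i)) := by
  have hχ : HasFDerivAt (inventory S w) (0 : (Fin d → ℝ) →L[ℝ] ℝ) x :=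
    hcrit ▸ (differentiableAt_inventory S w fun i => (hx i).ne').hasFDerivAt
  have hexp : HasFDerivAt (fun t i => exp (t i)) _ (fun i => log (x i)) :=
    (show Differentiable ℝ fun (t : Fin d → ℝ) i => exp (t i) by fun_prop) _ |>.hasFDerivAt
  rw [← show (fun i => exp (log (x i))) = x from funext fun i => exp_log (hx i)] at hχ
  simpa [Function.comp_def, inventory_exp] using hχ.comp _ hexp

variable {S w}

theorem strictConvexOn_expInventory (hw : ∀ s ∈ S, 0 < w s)
    (hspan : ∀ t : Fin d → ℝ, t ≠ 0 → ∃ s ∈ S, t ⬝ᵥ (Int.cast ∘ s) ≠ 0) :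
    StrictConvexOn ℝ univ (expInventory S w) := by
  refine ⟨convex_univ, fun x _ y _ hxy a b ha hb hab => ?_⟩
  obtain ⟨s₀, hs₀, hne⟩ := hspan (x - y) (sub_ne_zero.2 hxy)
  rw [sub_dotProduct, sub_ne_zero] at hne
  calc expInventory S w (a • x + b • y)
      = ∑ s ∈ S, w s * exp (a • (x ⬝ᵥ (Int.cast ∘ s)) + b • (y ⬝ᵥ (Int.cast ∘ s))) := by
        simp only [expInventory, add_dotProduct, smul_dotProduct]
    _ < ∑ s ∈ S, w s * (a • exp (x ⬝ᵥ (Int.cast ∘ s)) + b • exp (y ⬝ᵥ (Int.cast ∘ s))) :=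
        Finset.sum_lt_sum
          (fun s hs => mul_le_mul_of_nonneg_left
            (convexOn_exp.2 trivial trivial ha.le hb.le hab) (hw s hs).le)
          ⟨s₀, hs₀, mul_lt_mul_of_pos_left
            (strictConvexOn_exp.2 trivial trivial hne ha hb hab) (hw s₀ hs₀)⟩
    _ = a • expInventory S w x + b • expInventory S w y := by
        simp only [expInventory, smul_eq_mul, Finset.mul_sum, ← Finset.sum_add_distrib]
        exact Finset.sum_congr rfl fun s _ => by ring

theorem exists_pos_mul_norm_le_expInventory (hw : ∀ s ∈ S, 0 < w s)
    (hH1 : ∀ t : Fin d → ℝ, t ≠ 0 → ∃ s ∈ S, t ⬝ᵥ (Int.cast ∘ s) < 0) :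
    ∃ c > 0, ∀ t, c * ‖t‖ ≤ expInventory S w t := by
  obtain ⟨c, hc, hcg⟩ := exists_pos_mul_norm_le_of_posHomogeneous
    (g := fun t => ∑ s ∈ S, w s * max (t ⬝ᵥ (Int.cast ∘ s)) 0) (by fun_prop)
    (fun a ha t => by
      simp only [smul_dotProduct, smul_eq_mul, Finset.mul_sum]
      refine Finset.sum_congr rfl fun s _ => ?_
      rw [← mul_zero a, ← mul_max_of_nonneg _ _ ha, mul_zero]
      ring)
    (fun t ht => by
      obtain ⟨s, hs, hneg⟩ := hH1 (-t) (neg_ne_zero.2 ht)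
      rw [neg_dotProduct, neg_lt_zero] at hneg
      exact Finset.sum_pos' (fun s hs => mul_nonneg (hw s hs).le (le_max_right _ _))
        ⟨s, hs, mul_pos (hw s hs) (lt_max_of_lt_left hneg)⟩)
  refine ⟨c, hc, fun t => (hcg t).trans (Finset.sum_le_sum fun s hs => ?_)⟩
  refine mul_le_mul_of_nonneg_left (max_le ?_ (exp_pos _).le) (hw s hs).le
  linarith [add_one_le_exp (t ⬝ᵥ (Int.cast ∘ s))]

theorem exists_isMinOn_expInventory (hw : ∀ s ∈ S, 0 < w s)
    (hH1 : ∀ t : Fin d → ℝ, t ≠ 0 → ∃ s ∈ S, t ⬝ᵥ (Int.cast ∘ s) < 0) :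
    ∃ t₀, IsMinOn (expInventory S w) univ t₀ := by
  obtain ⟨c, hc, hle⟩ := exists_pos_mul_norm_le_expInventory hw hH1
  obtain ⟨t₀, ht₀⟩ := (continuous_expInventory S w).exists_forall_le <|
    tendsto_atTop_mono hle (tendsto_norm_cocompact_atTop.const_mul_atTop hc)
  exact ⟨t₀, isMinOn_univ_iff.2 ht₀⟩

theorem forall_inventory_le_iff {y : Fin d → ℝ} (hy : ∀ i, 0 < y i) :
    (∀ x : Fin d → ℝ, (∀ i, 0 < x i) → inventory S w y ≤ inventory S w x) ↔
      IsMinOn (expInventory S w) univ (fun i => log (y i)) := by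
  rw [isMinOn_univ_iff, inventory_eq_expInventory_log S w hy]
  refine ⟨fun h t => ?_, fun h x hx => ?_⟩
  · simpa only [inventory_exp] using h _ fun i => exp_pos (t i)
  · simpa only [inventory_eq_expInventory_log S w hx] using h _

end Inventory

open Inventory in
theorem stmt10_general {d : ℕ} {S : Finset (Fin d → ℤ)}
    {w : (Fin d → ℤ) → ℝ} (hw : ∀ s ∈ S, 0 < w s)
    (hH1 : ∀ x : Fin d → ℝ, x ≠ 0 → ∃ s ∈ S, (∑ i, x i * (s i : ℝ)) < 0) :
    ∃ x₀ : Fin d → ℝ, (∀ i, 0 < x₀ i) ∧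
      (∀ x : Fin d → ℝ, (∀ i, 0 < x i) →
        (∑ s ∈ S, w s * ∏ i, x₀ i ^ (s i)) ≤ ∑ s ∈ S, w s * ∏ i, x i ^ (s i)) ∧
      fderiv ℝ (fun x : Fin d → ℝ => ∑ s ∈ S, w s * ∏ i, x i ^ (s i)) x₀ = 0 ∧
      (∀ y : Fin d → ℝ, (∀ i, 0 < y i) →
        ((∀ x : Fin d → ℝ, (∀ i, 0 < x i) →
            (∑ s ∈ S, w s * ∏ i, y i ^ (s i)) ≤ ∑ s ∈ S, w s * ∏ i, x i ^ (s i)) ∨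
          fderiv ℝ (fun x : Fin d → ℝ => ∑ s ∈ S, w s * ∏ i, x i ^ (s i)) y = 0) →
        y = x₀) := by
  obtain ⟨t₀, ht₀⟩ := exists_isMinOn_expInventory hw hH1
  have hconvex := strictConvexOn_expInventory hw fun t ht =>
    (hH1 t ht).imp fun _ ⟨hs, hlt⟩ => ⟨hs, hlt.ne⟩
  set x₀ : Fin d → ℝ := fun i => exp (t₀ i)
  have hx₀ : ∀ i, 0 < x₀ i := fun i => exp_pos _
  have hx₀min : ∀ x : Fin d → ℝ, (∀ i, 0 < x i) → inventory S w x₀ ≤ inventory S w x :=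
    (forall_inventory_le_iff hx₀).2 (by simpa [x₀] using ht₀)
  have horthant : ∀ᶠ x in 𝓝 x₀, ∀ i, 0 < x i := eventually_all.2 fun i =>
    continuousAt_const.eventually_lt (continuous_apply i).continuousAt (hx₀ i)
  refine ⟨x₀, hx₀, hx₀min, IsLocalMin.fderiv_eq_zero (horthant.mono hx₀min), fun y hy hyx => ?_⟩
  have hymin : IsMinOn (expInventory S w) univ (fun i => log (y i)) := by
    rcases hyx with hmin | hcrit
    · exact (forall_inventory_le_iff hy).1 hmin
    · exact hconvex.convexOn.isMinOn_of_hasFDerivAt_zero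
        (hasFDerivAt_expInventory_log S w hy hcrit)
  have hlog := hconvex.eq_of_isMinOn hymin ht₀ trivial trivial
  funext i
  simp only [x₀, ← hlog, exp_log (hy i)]

/-- For an inventory `χ(x) = Σ_{s∈S} w(s) x^s` of a small step-set
`S ⊆ {−1,0,1}^d` with positive weights, satisfying the irreducibility assumption (H1),
`χ` attains a global minimum on the open positive orthant at a unique point `x₀`, which
is also the unique critical point of `χ` there. -/
theorem stmt10 {d : ℕ} (hd : 0 < d) {S : Finset (Fin d → ℤ)}
    (hS : ∀ s ∈ S, ∀ i, s i = -1 ∨ s i = 0 ∨ s i = 1)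
    {w : (Fin d → ℤ) → ℝ} (hw : ∀ s ∈ S, 0 < w s)
    (hH1 : ∀ x : Fin d → ℝ, x ≠ 0 → ∃ s ∈ S, (∑ i, x i * (s i : ℝ)) < 0) :
    ∃ x₀ : Fin d → ℝ, (∀ i, 0 < x₀ i) ∧
      (∀ x : Fin d → ℝ, (∀ i, 0 < x i) →
        (∑ s ∈ S, w s * ∏ i, x₀ i ^ (s i)) ≤ ∑ s ∈ S, w s * ∏ i, x i ^ (s i)) ∧
      fderiv ℝ (fun x : Fin d → ℝ => ∑ s ∈ S, w s * ∏ i, x i ^ (s i)) x₀ = 0 ∧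
      (∀ y : Fin d → ℝ, (∀ i, 0 < y i) →
        ((∀ x : Fin d → ℝ, (∀ i, 0 < x i) →
            (∑ s ∈ S, w s * ∏ i, y i ^ (s i)) ≤ ∑ s ∈ S, w s * ∏ i, x i ^ (s i)) ∨
          fderiv ℝ (fun x : Fin d → ℝ => ∑ s ∈ S, w s * ∏ i, x i ^ (s i)) y = 0) →
        y = x₀) :=
  stmt10_general hw hH1
end

section
/- For the unweighted step-set S = {(1,1),(1,0),(−1,0),(−1,−1)} (all weights 1), the birational transformations φ₁(x,y) = (1/(xy), y) and φ₂(x,y) = (x, 1/(x²y)) are involutions and the group ⟨φ₁, φ₂⟩ has order 8, i.e. (φ₁φ₂)⁴ = id and (φ₁φ₂)² ≠ id. -/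
/-!
The composite `φ₁ ∘ φ₂` sends `(x, y)` to `(x y, 1 / (x² y))`; applying it twice gives
`(x⁻¹, y⁻¹)`, which is visibly an involution of the torus but not the identity. Hence
`φ₁ ∘ φ₂` has order exactly 4, and the group generated by the two involutions is dihedral of
order 8.
-/

namespace GesselWalk

variable {K : Type*} [Field K]

def φ₁ (p : K × K) : K × K := (1 / (p.1 * p.2), p.2)

def φ₂ (p : K × K) : K × K := (p.1, 1 / (p.1 ^ 2 * p.2))

theorem φ₁_φ₁ {p : K × K} (hy : p.2 ≠ 0) : φ₁ (φ₁ p) = p := by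
  obtain ⟨x, y⟩ := p
  simp only [φ₁, Prod.mk.injEq, and_true]
  field_simp

theorem φ₂_φ₂ {p : K × K} (hx : p.1 ≠ 0) : φ₂ (φ₂ p) = p := by
  obtain ⟨x, y⟩ := p
  simp only [φ₂, Prod.mk.injEq, true_and]
  field_simp

-- At `p.1 = 0` both sides are `(0, 0)`, because `0⁻¹ = 0`.
theorem φ₁_comp_φ₂_apply (p : K × K) : (φ₁ ∘ φ₂) p = (p.1 * p.2, 1 / (p.1 ^ 2 * p.2)) := by
  obtain ⟨x, y⟩ := p
  simp only [Function.comp_apply, φ₁, φ₂, Prod.mk.injEq, and_true]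
  rcases eq_or_ne x 0 with rfl | hx
  · simp
  · field_simp

theorem iterate_two_φ₁_comp_φ₂ {p : K × K} (hx : p.1 ≠ 0) (hy : p.2 ≠ 0) :
    (φ₁ ∘ φ₂)^[2] p = p⁻¹ := by
  obtain ⟨x, y⟩ := p
  simp only at hx hy
  simp only [Function.iterate_succ_apply', Function.iterate_zero_apply, φ₁_comp_φ₂_apply,
    Prod.inv_mk, Prod.mk.injEq]
  constructor <;> field_simp

theorem iterate_four_φ₁_comp_φ₂ {p : K × K} (hx : p.1 ≠ 0) (hy : p.2 ≠ 0) :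
    (φ₁ ∘ φ₂)^[4] p = p := by
  rw [Function.iterate_add_apply (n := 2) (m := 2), iterate_two_φ₁_comp_φ₂ hx hy,
    iterate_two_φ₁_comp_φ₂ (inv_ne_zero hx) (inv_ne_zero hy), inv_inv]

end GesselWalk

open GesselWalk

/-- For the unweighted step-set `{(1,1),(1,0),(−1,0),(−1,−1)}`, the
maps `φ₁(x,y) = (1/(xy), y)` and `φ₂(x,y) = (x, 1/(x²y))` are involutions on nonzero
pairs, and `⟨φ₁, φ₂⟩` has order 8: `(φ₁φ₂)⁴ = id` and `(φ₁φ₂)² ≠ id`. -/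
theorem stmt13 :
    let φ₁ : ℚ × ℚ → ℚ × ℚ := fun p => (1 / (p.1 * p.2), p.2)
    let φ₂ : ℚ × ℚ → ℚ × ℚ := fun p => (p.1, 1 / (p.1 ^ 2 * p.2))
    let g : ℚ × ℚ → ℚ × ℚ := φ₁ ∘ φ₂
    (∀ p : ℚ × ℚ, p.1 ≠ 0 → p.2 ≠ 0 → φ₁ (φ₁ p) = p) ∧
    (∀ p : ℚ × ℚ, p.1 ≠ 0 → p.2 ≠ 0 → φ₂ (φ₂ p) = p) ∧
    (∀ p : ℚ × ℚ, p.1 ≠ 0 → p.2 ≠ 0 → g^[4] p = p) ∧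
    (∃ p : ℚ × ℚ, p.1 ≠ 0 ∧ p.2 ≠ 0 ∧ g^[2] p ≠ p) := by
  refine ⟨fun p _ hy => φ₁_φ₁ hy, fun p hx _ => φ₂_φ₂ hx,
    fun p hx hy => iterate_four_φ₁_comp_φ₂ hx hy, (2, 3), two_ne_zero, three_ne_zero, ?_⟩
  show (φ₁ ∘ φ₂)^[2] ((2, 3) : ℚ × ℚ) ≠ (2, 3)
  rw [iterate_two_φ₁_comp_φ₂ two_ne_zero three_ne_zero]
  norm_num
end
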